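/- For every n ≥ 1, if a vector ψ : {0,…,n} → ℂ satisfies Mⁿ(u,v)·ψ = ψ for all u, v ∈ ℂ with |u|² + |v|² = 1, then ψ = 0. That is, the representation Mⁿ of SU(2) has no nonzero invariant vector for n ≥ 1, so the only pure rotationally invariant states are those of total angular momentum zero. -/

import Mathlib

/-!
For `v = 0` the matrix `Mⁿ(u, 0)` is diagonal with entries `u^(n-k) ū^k`, which on the unit
circle equal `u^(n-2k)`; choosing `u` with `u^(n-2k) = -1` kills every component `ψₖ` with
`2k ≠ n`. If `n` is even, the middle component remains; the `0`-th row of the invariance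
equation, at any `(u, v)` with `u, v ≠ 0`, then reads `M₀,ₙ/₂ ψₙ/₂ = ψ₀ = 0`, and
`M₀,ₙ/₂ = ±√C(n, n/2) uⁿᐟ² v̄ⁿᐟ² ≠ 0`.
-/

open Matrix Finset

/-- The polynomial parametrization `U^{(j)}` (with `j = n/2`, index `k = j - m`) of the
spin-`j` rotation matrix, as an `(n+1)×(n+1)` complex matrix depending on `u, v ∈ ℂ`. -/
noncomputable def Mrep (n : ℕ) (u v : ℂ) : Matrix (Fin (n + 1)) (Fin (n + 1)) ℂ :=
  Matrix.of fun k' k =>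
    (Real.sqrt ((n.choose (k : ℕ) : ℝ) / (n.choose (k' : ℕ) : ℝ)) : ℂ) *
      ∑ a ∈ Finset.Icc (max 0 ((k : ℕ) - (k' : ℕ))) (min (k : ℕ) (n - (k' : ℕ))),
        ((k : ℕ).choose a : ℂ) * ((n - (k : ℕ)).choose ((k' : ℕ) + a - (k : ℕ)) : ℂ) *
          (-1 : ℂ) ^ a * u ^ (n - (k' : ℕ) - a) * (starRingEnd ℂ u) ^ ((k : ℕ) - a) *
          v ^ ((k' : ℕ) + a - (k : ℕ)) * (starRingEnd ℂ v) ^ a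

theorem Mrep_zero_right (n : ℕ) (u : ℂ) :
    Mrep n u 0 =
      diagonal fun k : Fin (n + 1) => u ^ (n - (k : ℕ)) * starRingEnd ℂ u ^ (k : ℕ) := by
  ext k j
  simp only [Mrep, of_apply, diagonal_apply, map_zero]
  split_ifs with h
  · subst h
    rw [div_self (by exact_mod_cast (Nat.choose_pos (Nat.le_of_lt_succ k.2)).ne'),
      Real.sqrt_one, Finset.sum_eq_single 0]
    · simp
    · intro a _ ha
      simp [zero_pow ha]
    · simp
  · refine mul_eq_zero_of_right _ (Finset.sum_eq_zero fun a ha => ?_)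
    have : (k : ℕ) + a - j ≠ 0 ∨ a ≠ 0 := by
      simp only [Finset.mem_Icc] at ha
      have := Fin.val_ne_of_ne h
      omega
    rcases this with h' | h' <;> simp [zero_pow h']

theorem Mrep_zero_apply (n : ℕ) (u v : ℂ) (m : Fin (n + 1)) :
    Mrep n u v 0 m =
      Real.sqrt (n.choose m) *
        ((-1) ^ (m : ℕ) * u ^ (n - m) * starRingEnd ℂ v ^ (m : ℕ)) := by
  simp only [Mrep, of_apply, Fin.val_zero, Nat.sub_zero, Nat.choose_zero_right, Nat.cast_one,
    div_one, max_eq_right (Nat.zero_le _), min_eq_left (Nat.le_of_lt_succ m.2), Finset.Icc_self,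
    Finset.sum_singleton]
  simp

theorem Mrep_zero_apply_ne_zero (n : ℕ) {u v : ℂ} (hu : u ≠ 0) (hv : v ≠ 0)
    (m : Fin (n + 1)) :
    Mrep n u v 0 m ≠ 0 := by
  rw [Mrep_zero_apply]
  have : (0 : ℝ) < n.choose m := by exact_mod_cast Nat.choose_pos (Nat.le_of_lt_succ m.2)
  simp [hu, hv, this.ne']

theorem exists_norm_eq_one_pow_mul_conj_pow_eq_neg_one {a b : ℕ} (h : a ≠ b) :
    ∃ u : ℂ, ‖u‖ = 1 ∧ u ^ a * starRingEnd ℂ u ^ b = -1 := by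
  have hab : (a : ℂ) - b ≠ 0 := sub_ne_zero.2 (by exact_mod_cast h)
  set θ : ℝ := Real.pi / (a - b)
  refine ⟨Complex.exp (θ * Complex.I), Complex.norm_exp_ofReal_mul_I θ, ?_⟩
  rw [← Complex.exp_conj, ← Complex.exp_nat_mul, ← Complex.exp_nat_mul, ← Complex.exp_add,
    ← Complex.exp_pi_mul_I]
  congr 1
  rw [map_mul, Complex.conj_ofReal, Complex.conj_I]
  simp only [θ, Complex.ofReal_div, Complex.ofReal_sub, Complex.ofReal_natCast]
  field_simp
  ring

def IsMrepInvariant (n : ℕ) (ψ : Fin (n + 1) → ℂ) : Prop :=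
  ∀ u v : ℂ, ‖u‖ ^ 2 + ‖v‖ ^ 2 = 1 → (Mrep n u v).mulVec ψ = ψ

theorem IsMrepInvariant.apply_eq_zero_of_two_mul_ne {n : ℕ} {ψ : Fin (n + 1) → ℂ}
    (hψ : IsMrepInvariant n ψ) {k : Fin (n + 1)} (hk : 2 * (k : ℕ) ≠ n) : ψ k = 0 := by
  obtain ⟨u, hu_norm, hu⟩ :=
    exists_norm_eq_one_pow_mul_conj_pow_eq_neg_one (a := n - k) (b := k) (by omega)
  have h := congrFun (hψ u 0 (by simp [hu_norm])) k
  rw [Mrep_zero_right, mulVec_diagonal, hu] at h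
  linear_combination -h / 2

theorem Mrep_no_invariant_vector (n : ℕ) (hn : 1 ≤ n) (ψ : Fin (n + 1) → ℂ)
    (hψ : ∀ u v : ℂ, ‖u‖ ^ 2 + ‖v‖ ^ 2 = 1 →
      (Mrep n u v).mulVec ψ = ψ) :
    ψ = 0 := by
  have hinv : IsMrepInvariant n ψ := hψ
  funext k
  by_cases hk : 2 * (k : ℕ) = n
  · have h := congrFun (hinv (3 / 5) (4 / 5) (by norm_num)) 0
    rw [mulVec, dotProduct, hinv.apply_eq_zero_of_two_mul_ne (k := 0) (by simp; omega),
      Finset.sum_eq_single k (fun j _ hj => by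
        rw [hinv.apply_eq_zero_of_two_mul_ne (fun h' => hj (Fin.ext (by omega))), mul_zero])
        (by simp)] at h
    exact (mul_eq_zero.1 h).resolve_left
      (Mrep_zero_apply_ne_zero n (by norm_num) (by norm_num) k)
  · exact hinv.apply_eq_zero_of_two_mul_ne hk
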